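/- The ℂ-vector space of homogeneous degree-3 Heisenberg-invariant polynomials in ℂ[X_b : b ∈ (ℤ/3ℤ)²] has dimension 5, and a basis is given by the five polynomials F₀ = Σ_b X_b³, F₁ = Σ_b X_b·X_{b+(0,1)}·X_{b+(0,2)}, F₂ = Σ_b X_b·X_{b+(1,0)}·X_{b+(2,0)}, F₃ = Σ_b X_b·X_{b+(1,1)}·X_{b+(2,2)}, F₄ = Σ_b X_b·X_{b+(1,2)}·X_{b+(2,1)}, where each sum runs over b ∈ (ℤ/3ℤ)². -/

import Mathlib

open MvPolynomial

/-- `ω = exp(2πi/3)`, a primitive cube root of unity. -/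
noncomputable def omega : ℂ := Complex.exp (2 * Real.pi * Complex.I / 3)

/-- The index set `(ℤ/3)²` of the nine variables. -/
abbrev Idx : Type := ZMod 3 × ZMod 3

/-- Standard dot product on `(ℤ/3)²` with values in `ℤ/3`. -/
def pdot (a b : Idx) : ZMod 3 := a.1 * b.1 + a.2 * b.2

/-- The translation substitution `X_b ↦ X_{b+a}`. -/
noncomputable def trOp (a : Idx) : MvPolynomial Idx ℂ →ₐ[ℂ] MvPolynomial Idx ℂ :=
  rename (· + a)

/-- The modulation substitution `X_b ↦ ω^{a*·b}·X_b`. -/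
noncomputable def modOp (as : Idx) : MvPolynomial Idx ℂ →ₐ[ℂ] MvPolynomial Idx ℂ :=
  aeval fun b : Idx => C (omega ^ (pdot as b).val) * X b

/-- A polynomial is Heisenberg-invariant if it is fixed by all translation and
modulation substitutions. -/
def HeisenbergInvariant (P : MvPolynomial Idx ℂ) : Prop :=
  (∀ a : Idx, trOp a P = P) ∧ (∀ as : Idx, modOp as P = P)

noncomputable def F0 : MvPolynomial Idx ℂ := ∑ b : Idx, X b ^ 3
noncomputable def F1 : MvPolynomial Idx ℂ := ∑ b : Idx, X b * X (b + (0, 1)) * X (b + (0, 2))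
noncomputable def F2 : MvPolynomial Idx ℂ := ∑ b : Idx, X b * X (b + (1, 0)) * X (b + (2, 0))
noncomputable def F3 : MvPolynomial Idx ℂ := ∑ b : Idx, X b * X (b + (1, 1)) * X (b + (2, 2))
noncomputable def F4 : MvPolynomial Idx ℂ := ∑ b : Idx, X b * X (b + (1, 2)) * X (b + (2, 1))

lemma omega_prim : IsPrimitiveRoot omega 3 := by
  have := Complex.isPrimitiveRoot_exp 3 (by norm_num)
  simpa [omega] using this

lemma omega3 : omega ^ 3 = 1 := omega_prim.pow_eq_one

noncomputable def zeta (z : ZMod 3) : ℂ := omega ^ z.val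

lemma omega_pow_mod (n : ℕ) : omega ^ (n % 3) = omega ^ n := by
  conv_rhs => rw [← Nat.div_add_mod n 3]
  rw [pow_add, pow_mul, omega3, one_pow, one_mul]

lemma zeta_add (x y : ZMod 3) : zeta (x + y) = zeta x * zeta y := by
  unfold zeta
  rw [ZMod.val_add, omega_pow_mod, pow_add]

@[simp] lemma zeta_zero : zeta 0 = 1 := by simp [zeta]

lemma zeta_ne_one {z : ZMod 3} (hz : z ≠ 0) : zeta z ≠ 1 := by
  have hv : z.val = 1 ∨ z.val = 2 := by revert hz; revert z; decide
  unfold zeta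
  rcases hv with h | h <;> rw [h] <;>
    exact omega_prim.pow_ne_one_of_pos_of_lt (by norm_num) (by norm_num)

noncomputable def e (x : Idx) : Idx →₀ ℕ := Finsupp.single x 1

lemma esum_eq_iff {a b c x y z : Idx} :
    e a + e b + e c = e x + e y + e z ↔ ({a, b, c} : Multiset Idx) = {x, y, z} := by
  constructor
  · intro h
    have := congrArg Finsupp.toMultiset h
    simpa [e, Finsupp.toMultiset_add, Finsupp.toMultiset_single,
      Multiset.insert_eq_cons, Multiset.singleton_add] using this
  · intro h
    have hinj : Function.Injective (fun f : Idx →₀ ℕ => Finsupp.toMultiset f) := fun f g hfg => by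
      rw [← Finsupp.toMultiset_toFinsupp f, ← Finsupp.toMultiset_toFinsupp g]
      exact congrArg Multiset.toFinsupp hfg
    apply hinj
    simpa [e, Finsupp.toMultiset_add, Finsupp.toMultiset_single,
      Multiset.insert_eq_cons, Multiset.singleton_add] using h

lemma X_mul_X_mul_X (a b c : Idx) :
    (X a * X b * X c : MvPolynomial Idx ℂ) = monomial (e a + e b + e c) 1 := by
  simp [e, X, monomial_mul]

lemma X_cube (a : Idx) : (X a ^ 3 : MvPolynomial Idx ℂ) = monomial (e a + e a + e a) 1 := by
  rw [X_pow_eq_monomial]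
  congr 1
  simp [e, ← Finsupp.single_add]

lemma modOp_X (as b : Idx) : modOp as (X b) = C (zeta (pdot as b)) * X b := by
  simp [modOp, zeta, aeval_X]

lemma modOp_monomial (as : Idx) (m : Idx →₀ ℕ) (r : ℂ) :
    modOp as (monomial m r) = monomial m ((m.prod fun b k => zeta (pdot as b) ^ k) * r) := by
  induction m using Finsupp.induction with
  | zero => simp [monomial_zero', modOp]
  | single_add a n f ha hn ih =>
      have hmon : (monomial (Finsupp.single a n + f) r : MvPolynomial Idx ℂ)
          = monomial (Finsupp.single a n) 1 * monomial f r := by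
        rw [monomial_mul, one_mul]
      rw [hmon, map_mul, ih, ← X_pow_eq_monomial, map_pow, modOp_X, mul_pow, ← C_pow,
        Finsupp.prod_add_index' (by intro i; simp) (by intro i k l; rw [pow_add]),
        Finsupp.prod_single_index (by simp)]
      rw [X_pow_eq_monomial, C_mul_monomial, monomial_mul]
      congr 1
      ring

lemma coeff_modOp (as : Idx) (Q : MvPolynomial Idx ℂ) (m : Idx →₀ ℕ) :
    coeff m (modOp as Q) = (m.prod fun b k => zeta (pdot as b) ^ k) * coeff m Q := by
  conv_lhs => rw [Q.as_sum]
  rw [map_sum]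
  rw [MvPolynomial.coeff_sum]
  simp only [modOp_monomial, coeff_monomial]
  rw [Finset.sum_ite_eq' Q.support m fun v => (v.prod fun b k => zeta (pdot as b) ^ k) * coeff v Q]
  split_ifs with h
  · rfl
  · rw [MvPolynomial.notMem_support_iff.mp h, mul_zero]

lemma pdot_add_right (as a b : Idx) : pdot as (a + b) = pdot as a + pdot as b := by
  simp [pdot]; ring

lemma coeff_e3_modOp (as a b c : Idx) (Q : MvPolynomial Idx ℂ) :
    coeff (e a + e b + e c) (modOp as Q)
      = zeta (pdot as (a + b + c)) * coeff (e a + e b + e c) Q := by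
  rw [coeff_modOp]
  congr 1
  rw [Finsupp.prod_add_index' (by intro i; simp) (by intro i k l; rw [pow_add]),
    Finsupp.prod_add_index' (by intro i; simp) (by intro i k l; rw [pow_add])]
  simp only [e]
  rw [Finsupp.prod_single_index (by simp), Finsupp.prod_single_index (by simp),
    Finsupp.prod_single_index (by simp), pow_one, pow_one, pow_one,
    pdot_add_right, pdot_add_right, zeta_add, zeta_add]

lemma vanish_mod {Q : MvPolynomial Idx ℂ} (hQ : ∀ as : Idx, modOp as Q = Q)
    {a b c : Idx} (h : a + b + c ≠ 0) : coeff (e a + e b + e c) Q = 0 := by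
  have h1 := congrArg (coeff (e a + e b + e c)) (hQ (a + b + c))
  rw [coeff_e3_modOp] at h1
  have hp : pdot (a + b + c) (a + b + c) ≠ 0 := by
    revert h; generalize a + b + c = s; revert s; decide
  have hz := zeta_ne_one hp
  by_contra hcoeff
  exact hz (mul_right_cancel₀ hcoeff (by rw [h1, one_mul]))

lemma coeff_shift {Q : MvPolynomial Idx ℂ} {v : Idx} (hQ : trOp v Q = Q) (a b c : Idx) :
    coeff (e (a + v) + e (b + v) + e (c + v)) Q = coeff (e a + e b + e c) Q := by
  conv_lhs => rw [← hQ]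
  have hm : e (a + v) + e (b + v) + e (c + v)
      = Finsupp.mapDomain (· + v) (e a + e b + e c) := by
    simp [e, Finsupp.mapDomain_add, Finsupp.mapDomain_single]
  rw [hm, trOp, coeff_rename_mapDomain _ (add_left_injective v)]

lemma exists_abc {m : Idx →₀ ℕ} (hm : Finsupp.degree m = 3) :
    ∃ a b c : Idx, m = e a + e b + e c := by
  have hc : Multiset.card (Finsupp.toMultiset m) = 3 := by
    rw [Finsupp.card_toMultiset]
    simp only [Finsupp.sum, id]; exact hm
  obtain ⟨a, b, c, h⟩ := Multiset.card_eq_three.mp hc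
  refine ⟨a, b, c, ?_⟩
  have : Finsupp.toMultiset m = Finsupp.toMultiset (e a + e b + e c) := by
    rw [h]
    simp [e, Finsupp.toMultiset_add, Finsupp.toMultiset_single, Multiset.insert_eq_cons,
      Multiset.singleton_add]
  rw [← Finsupp.toMultiset_toFinsupp m, ← Finsupp.toMultiset_toFinsupp (e a + e b + e c)]
  exact congrArg Multiset.toFinsupp this


lemma coeff_F_gen (u w : Idx) (x y z : Idx) :
    coeff (e x + e y + e z) (∑ b : Idx, X b * X (b + u) * X (b + w))
      = ((Finset.univ.filter fun b : Idx =>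
          ({b, b + u, b + w} : Multiset Idx) = {x, y, z}).card : ℂ) := by
  rw [MvPolynomial.coeff_sum]
  simp only [X_mul_X_mul_X, coeff_monomial, esum_eq_iff]
  rw [Finset.sum_boole]

lemma coeff_F0_gen (x y z : Idx) :
    coeff (e x + e y + e z) F0
      = ((Finset.univ.filter fun b : Idx =>
          ({b, b, b} : Multiset Idx) = {x, y, z}).card : ℂ) := by
  rw [F0, MvPolynomial.coeff_sum]
  simp only [X_cube, coeff_monomial, esum_eq_iff]
  rw [Finset.sum_boole]

noncomputable def Mrep (j : Fin 5) : Idx →₀ ℕ :=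
  match j with
  | 0 => e (0,0) + e (0,0) + e (0,0)
  | 1 => e (0,0) + e (0,1) + e (0,2)
  | 2 => e (0,0) + e (1,0) + e (2,0)
  | 3 => e (0,0) + e (1,1) + e (2,2)
  | 4 => e (0,0) + e (1,2) + e (2,1)

lemma coeffM0F0 : coeff (Mrep 0) F0 = (1 : ℂ) := by
  show coeff (e (0,0) + e (0,0) + e (0,0)) F0 = (1 : ℂ)
  rw [coeff_F0_gen]
  have h : (Finset.univ.filter fun b : Idx =>
      ({b, b, b} : Multiset Idx) = {((0,0) : Idx), (0,0), (0,0)}).card = 1 := by decide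
  rw [h]; norm_num

lemma coeffM0F1 : coeff (Mrep 0) F1 = (0 : ℂ) := by
  show coeff (e (0,0) + e (0,0) + e (0,0)) F1 = (0 : ℂ)
  rw [F1, coeff_F_gen]
  have h : (Finset.univ.filter fun b : Idx =>
      ({b, b + (0,1), b + (0,2)} : Multiset Idx) = {((0,0) : Idx), (0,0), (0,0)}).card = 0 := by decide
  rw [h]; norm_num

lemma coeffM0F2 : coeff (Mrep 0) F2 = (0 : ℂ) := by
  show coeff (e (0,0) + e (0,0) + e (0,0)) F2 = (0 : ℂ)
  rw [F2, coeff_F_gen]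
  have h : (Finset.univ.filter fun b : Idx =>
      ({b, b + (1,0), b + (2,0)} : Multiset Idx) = {((0,0) : Idx), (0,0), (0,0)}).card = 0 := by decide
  rw [h]; norm_num

lemma coeffM0F3 : coeff (Mrep 0) F3 = (0 : ℂ) := by
  show coeff (e (0,0) + e (0,0) + e (0,0)) F3 = (0 : ℂ)
  rw [F3, coeff_F_gen]
  have h : (Finset.univ.filter fun b : Idx =>
      ({b, b + (1,1), b + (2,2)} : Multiset Idx) = {((0,0) : Idx), (0,0), (0,0)}).card = 0 := by decide
  rw [h]; norm_num

lemma coeffM0F4 : coeff (Mrep 0) F4 = (0 : ℂ) := by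
  show coeff (e (0,0) + e (0,0) + e (0,0)) F4 = (0 : ℂ)
  rw [F4, coeff_F_gen]
  have h : (Finset.univ.filter fun b : Idx =>
      ({b, b + (1,2), b + (2,1)} : Multiset Idx) = {((0,0) : Idx), (0,0), (0,0)}).card = 0 := by decide
  rw [h]; norm_num

lemma coeffM1F0 : coeff (Mrep 1) F0 = (0 : ℂ) := by
  show coeff (e (0,0) + e (0,1) + e (0,2)) F0 = (0 : ℂ)
  rw [coeff_F0_gen]
  have h : (Finset.univ.filter fun b : Idx =>
      ({b, b, b} : Multiset Idx) = {((0,0) : Idx), (0,1), (0,2)}).card = 0 := by decide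
  rw [h]; norm_num

lemma coeffM1F1 : coeff (Mrep 1) F1 = (3 : ℂ) := by
  show coeff (e (0,0) + e (0,1) + e (0,2)) F1 = (3 : ℂ)
  rw [F1, coeff_F_gen]
  have h : (Finset.univ.filter fun b : Idx =>
      ({b, b + (0,1), b + (0,2)} : Multiset Idx) = {((0,0) : Idx), (0,1), (0,2)}).card = 3 := by decide
  rw [h]; norm_num

lemma coeffM1F2 : coeff (Mrep 1) F2 = (0 : ℂ) := by
  show coeff (e (0,0) + e (0,1) + e (0,2)) F2 = (0 : ℂ)
  rw [F2, coeff_F_gen]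
  have h : (Finset.univ.filter fun b : Idx =>
      ({b, b + (1,0), b + (2,0)} : Multiset Idx) = {((0,0) : Idx), (0,1), (0,2)}).card = 0 := by decide
  rw [h]; norm_num

lemma coeffM1F3 : coeff (Mrep 1) F3 = (0 : ℂ) := by
  show coeff (e (0,0) + e (0,1) + e (0,2)) F3 = (0 : ℂ)
  rw [F3, coeff_F_gen]
  have h : (Finset.univ.filter fun b : Idx =>
      ({b, b + (1,1), b + (2,2)} : Multiset Idx) = {((0,0) : Idx), (0,1), (0,2)}).card = 0 := by decide
  rw [h]; norm_num

lemma coeffM1F4 : coeff (Mrep 1) F4 = (0 : ℂ) := by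
  show coeff (e (0,0) + e (0,1) + e (0,2)) F4 = (0 : ℂ)
  rw [F4, coeff_F_gen]
  have h : (Finset.univ.filter fun b : Idx =>
      ({b, b + (1,2), b + (2,1)} : Multiset Idx) = {((0,0) : Idx), (0,1), (0,2)}).card = 0 := by decide
  rw [h]; norm_num

lemma coeffM2F0 : coeff (Mrep 2) F0 = (0 : ℂ) := by
  show coeff (e (0,0) + e (1,0) + e (2,0)) F0 = (0 : ℂ)
  rw [coeff_F0_gen]
  have h : (Finset.univ.filter fun b : Idx =>
      ({b, b, b} : Multiset Idx) = {((0,0) : Idx), (1,0), (2,0)}).card = 0 := by decide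
  rw [h]; norm_num

lemma coeffM2F1 : coeff (Mrep 2) F1 = (0 : ℂ) := by
  show coeff (e (0,0) + e (1,0) + e (2,0)) F1 = (0 : ℂ)
  rw [F1, coeff_F_gen]
  have h : (Finset.univ.filter fun b : Idx =>
      ({b, b + (0,1), b + (0,2)} : Multiset Idx) = {((0,0) : Idx), (1,0), (2,0)}).card = 0 := by decide
  rw [h]; norm_num

lemma coeffM2F2 : coeff (Mrep 2) F2 = (3 : ℂ) := by
  show coeff (e (0,0) + e (1,0) + e (2,0)) F2 = (3 : ℂ)
  rw [F2, coeff_F_gen]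
  have h : (Finset.univ.filter fun b : Idx =>
      ({b, b + (1,0), b + (2,0)} : Multiset Idx) = {((0,0) : Idx), (1,0), (2,0)}).card = 3 := by decide
  rw [h]; norm_num

lemma coeffM2F3 : coeff (Mrep 2) F3 = (0 : ℂ) := by
  show coeff (e (0,0) + e (1,0) + e (2,0)) F3 = (0 : ℂ)
  rw [F3, coeff_F_gen]
  have h : (Finset.univ.filter fun b : Idx =>
      ({b, b + (1,1), b + (2,2)} : Multiset Idx) = {((0,0) : Idx), (1,0), (2,0)}).card = 0 := by decide
  rw [h]; norm_num

lemma coeffM2F4 : coeff (Mrep 2) F4 = (0 : ℂ) := by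
  show coeff (e (0,0) + e (1,0) + e (2,0)) F4 = (0 : ℂ)
  rw [F4, coeff_F_gen]
  have h : (Finset.univ.filter fun b : Idx =>
      ({b, b + (1,2), b + (2,1)} : Multiset Idx) = {((0,0) : Idx), (1,0), (2,0)}).card = 0 := by decide
  rw [h]; norm_num

lemma coeffM3F0 : coeff (Mrep 3) F0 = (0 : ℂ) := by
  show coeff (e (0,0) + e (1,1) + e (2,2)) F0 = (0 : ℂ)
  rw [coeff_F0_gen]
  have h : (Finset.univ.filter fun b : Idx =>
      ({b, b, b} : Multiset Idx) = {((0,0) : Idx), (1,1), (2,2)}).card = 0 := by decide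
  rw [h]; norm_num

lemma coeffM3F1 : coeff (Mrep 3) F1 = (0 : ℂ) := by
  show coeff (e (0,0) + e (1,1) + e (2,2)) F1 = (0 : ℂ)
  rw [F1, coeff_F_gen]
  have h : (Finset.univ.filter fun b : Idx =>
      ({b, b + (0,1), b + (0,2)} : Multiset Idx) = {((0,0) : Idx), (1,1), (2,2)}).card = 0 := by decide
  rw [h]; norm_num

lemma coeffM3F2 : coeff (Mrep 3) F2 = (0 : ℂ) := by
  show coeff (e (0,0) + e (1,1) + e (2,2)) F2 = (0 : ℂ)
  rw [F2, coeff_F_gen]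
  have h : (Finset.univ.filter fun b : Idx =>
      ({b, b + (1,0), b + (2,0)} : Multiset Idx) = {((0,0) : Idx), (1,1), (2,2)}).card = 0 := by decide
  rw [h]; norm_num

lemma coeffM3F3 : coeff (Mrep 3) F3 = (3 : ℂ) := by
  show coeff (e (0,0) + e (1,1) + e (2,2)) F3 = (3 : ℂ)
  rw [F3, coeff_F_gen]
  have h : (Finset.univ.filter fun b : Idx =>
      ({b, b + (1,1), b + (2,2)} : Multiset Idx) = {((0,0) : Idx), (1,1), (2,2)}).card = 3 := by decide
  rw [h]; norm_num

lemma coeffM3F4 : coeff (Mrep 3) F4 = (0 : ℂ) := by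
  show coeff (e (0,0) + e (1,1) + e (2,2)) F4 = (0 : ℂ)
  rw [F4, coeff_F_gen]
  have h : (Finset.univ.filter fun b : Idx =>
      ({b, b + (1,2), b + (2,1)} : Multiset Idx) = {((0,0) : Idx), (1,1), (2,2)}).card = 0 := by decide
  rw [h]; norm_num

lemma coeffM4F0 : coeff (Mrep 4) F0 = (0 : ℂ) := by
  show coeff (e (0,0) + e (1,2) + e (2,1)) F0 = (0 : ℂ)
  rw [coeff_F0_gen]
  have h : (Finset.univ.filter fun b : Idx =>
      ({b, b, b} : Multiset Idx) = {((0,0) : Idx), (1,2), (2,1)}).card = 0 := by decide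
  rw [h]; norm_num

lemma coeffM4F1 : coeff (Mrep 4) F1 = (0 : ℂ) := by
  show coeff (e (0,0) + e (1,2) + e (2,1)) F1 = (0 : ℂ)
  rw [F1, coeff_F_gen]
  have h : (Finset.univ.filter fun b : Idx =>
      ({b, b + (0,1), b + (0,2)} : Multiset Idx) = {((0,0) : Idx), (1,2), (2,1)}).card = 0 := by decide
  rw [h]; norm_num

lemma coeffM4F2 : coeff (Mrep 4) F2 = (0 : ℂ) := by
  show coeff (e (0,0) + e (1,2) + e (2,1)) F2 = (0 : ℂ)
  rw [F2, coeff_F_gen]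
  have h : (Finset.univ.filter fun b : Idx =>
      ({b, b + (1,0), b + (2,0)} : Multiset Idx) = {((0,0) : Idx), (1,2), (2,1)}).card = 0 := by decide
  rw [h]; norm_num

lemma coeffM4F3 : coeff (Mrep 4) F3 = (0 : ℂ) := by
  show coeff (e (0,0) + e (1,2) + e (2,1)) F3 = (0 : ℂ)
  rw [F3, coeff_F_gen]
  have h : (Finset.univ.filter fun b : Idx =>
      ({b, b + (1,1), b + (2,2)} : Multiset Idx) = {((0,0) : Idx), (1,2), (2,1)}).card = 0 := by decide
  rw [h]; norm_num

lemma coeffM4F4 : coeff (Mrep 4) F4 = (3 : ℂ) := by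
  show coeff (e (0,0) + e (1,2) + e (2,1)) F4 = (3 : ℂ)
  rw [F4, coeff_F_gen]
  have h : (Finset.univ.filter fun b : Idx =>
      ({b, b + (1,2), b + (2,1)} : Multiset Idx) = {((0,0) : Idx), (1,2), (2,1)}).card = 3 := by decide
  rw [h]; norm_num

lemma idx_triple (x : Idx) : x + x + x = 0 := by
  revert x; decide

lemma F_hom_gen (u w : Idx) :
    (∑ b : Idx, X b * X (b + u) * X (b + w) : MvPolynomial Idx ℂ).IsHomogeneous 3 := by
  apply MvPolynomial.IsHomogeneous.sum
  intro b _
  exact ((isHomogeneous_X ℂ b).mul (isHomogeneous_X ℂ (b + u))).mul (isHomogeneous_X ℂ (b + w))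

lemma F0_hom : F0.IsHomogeneous 3 := by
  apply MvPolynomial.IsHomogeneous.sum
  intro b _
  simpa using (isHomogeneous_X ℂ b).pow 3

lemma trOp_F_gen (u w v : Idx) :
    trOp v (∑ b : Idx, X b * X (b + u) * X (b + w) : MvPolynomial Idx ℂ)
      = ∑ b : Idx, X b * X (b + u) * X (b + w) := by
  rw [map_sum]
  simp only [trOp, rename_X, map_mul]
  refine Fintype.sum_equiv (Equiv.addRight v) _ _ fun b => ?_
  simp only [Equiv.coe_addRight]
  rw [add_right_comm b u v, add_right_comm b w v]

lemma trOp_F0 (v : Idx) : trOp v F0 = F0 := by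
  rw [F0, map_sum]
  simp only [trOp, map_pow, rename_X]
  exact Fintype.sum_equiv (Equiv.addRight v) _ _ fun b => rfl

lemma zeta_cube (t : ZMod 3) : zeta t ^ 3 = 1 := by
  unfold zeta
  rw [← pow_mul, mul_comm, pow_mul, omega3, one_pow]

lemma modOp_F_gen (u w as : Idx) (huw : u + w = 0) :
    modOp as (∑ b : Idx, X b * X (b + u) * X (b + w) : MvPolynomial Idx ℂ)
      = ∑ b : Idx, X b * X (b + u) * X (b + w) := by
  rw [map_sum]
  refine Finset.sum_congr rfl fun b _ => ?_
  rw [map_mul, map_mul, modOp_X, modOp_X, modOp_X]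
  have hsum : b + (b + u) + (b + w) = 0 := by
    have h3 := idx_triple b
    rw [show b + (b + u) + (b + w) = b + b + b + (u + w) by ring, h3, huw, add_zero]
  have : zeta (pdot as b) * zeta (pdot as (b + u)) * zeta (pdot as (b + w)) = 1 := by
    rw [← zeta_add, ← zeta_add, ← pdot_add_right, ← pdot_add_right, hsum]
    simp [pdot]
  calc C (zeta (pdot as b)) * X b * (C (zeta (pdot as (b + u))) * X (b + u)) *
        (C (zeta (pdot as (b + w))) * X (b + w))
      = C (zeta (pdot as b) * zeta (pdot as (b + u)) * zeta (pdot as (b + w))) *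
        (X b * X (b + u) * X (b + w)) := by rw [map_mul, map_mul]; ring
    _ = _ := by rw [this, map_one, one_mul]

lemma modOp_F0 (as : Idx) : modOp as F0 = F0 := by
  rw [F0, map_sum]
  refine Finset.sum_congr rfl fun b _ => ?_
  rw [map_pow, modOp_X, mul_pow, ← C_pow, zeta_cube, map_one, one_mul]


lemma key_vanish {Q : MvPolynomial Idx ℂ} (hhom : Q.IsHomogeneous 3)
    (htr : ∀ a : Idx, trOp a Q = Q) (hmod : ∀ as : Idx, modOp as Q = Q)
    (h0 : coeff (Mrep 0) Q = 0) (h1 : coeff (Mrep 1) Q = 0) (h2 : coeff (Mrep 2) Q = 0)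
    (h3' : coeff (Mrep 3) Q = 0) (h4 : coeff (Mrep 4) Q = 0) : Q = 0 := by
  ext m
  rw [coeff_zero]
  by_cases hc : coeff m Q = 0
  · exact hc
  have hdeg : Finsupp.degree m = 3 := by
    rw [Finsupp.degree_eq_weight_one]
    exact hhom hc
  obtain ⟨a, b, c, rfl⟩ := exists_abc hdeg
  by_cases hs : a + b + c = 0
  · have hshift := coeff_shift (htr a) 0 (b - a) (-(b - a))
    have k1 : (0 : Idx) + a = a := zero_add a
    have k2 : b - a + a = b := sub_add_cancel b a
    have k3 : -(b - a) + a = c := by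
      have hc' : c = -a - b := by linear_combination hs
      rw [hc']
      linear_combination idx_triple a
    rw [k1, k2, k3] at hshift
    rw [hshift]
    have hd : ∀ d : Idx, ({0, d, -d} : Multiset Idx) = {(0,0), (0,0), (0,0)}
        ∨ ({0, d, -d} : Multiset Idx) = {(0,0), (0,1), (0,2)}
        ∨ ({0, d, -d} : Multiset Idx) = {(0,0), (1,0), (2,0)}
        ∨ ({0, d, -d} : Multiset Idx) = {(0,0), (1,1), (2,2)}
        ∨ ({0, d, -d} : Multiset Idx) = {(0,0), (1,2), (2,1)} := by decide
    rcases hd (b - a) with h' | h' | h' | h' | h'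
    · rw [show e 0 + e (b - a) + e (-(b - a)) = Mrep 0 from esum_eq_iff.2 h']; exact h0
    · rw [show e 0 + e (b - a) + e (-(b - a)) = Mrep 1 from esum_eq_iff.2 h']; exact h1
    · rw [show e 0 + e (b - a) + e (-(b - a)) = Mrep 2 from esum_eq_iff.2 h']; exact h2
    · rw [show e 0 + e (b - a) + e (-(b - a)) = Mrep 3 from esum_eq_iff.2 h']; exact h3'
    · rw [show e 0 + e (b - a) + e (-(b - a)) = Mrep 4 from esum_eq_iff.2 h']; exact h4
  · exact vanish_mod hmod hs

lemma hom_smul {P : MvPolynomial Idx ℂ} (h : P.IsHomogeneous 3) (r : ℂ) :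
    (r • P).IsHomogeneous 3 := by
  rw [← mem_homogeneousSubmodule] at h ⊢
  exact Submodule.smul_mem _ r h

lemma F1_eq : F1 = ∑ b : Idx, X b * X (b + (0, 1)) * X (b + (0, 2)) := rfl
lemma F2_eq : F2 = ∑ b : Idx, X b * X (b + (1, 0)) * X (b + (2, 0)) := rfl
lemma F3_eq : F3 = ∑ b : Idx, X b * X (b + (1, 1)) * X (b + (2, 2)) := rfl
lemma F4_eq : F4 = ∑ b : Idx, X b * X (b + (1, 2)) * X (b + (2, 1)) := rfl

lemma F_hom : ∀ j : Fin 5, (![F0, F1, F2, F3, F4] j).IsHomogeneous 3 := by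
  intro j
  fin_cases j <;>
    simp only [Matrix.cons_val_zero, Matrix.cons_val_one, Matrix.head_cons, Matrix.cons_val_two,
      Matrix.tail_cons, Matrix.cons_val_three, Matrix.cons_val_four]
  · exact F0_hom
  · exact F_hom_gen (0,1) (0,2)
  · exact F_hom_gen (1,0) (2,0)
  · exact F_hom_gen (1,1) (2,2)
  · exact F_hom_gen (1,2) (2,1)

lemma F_tr (v : Idx) : ∀ j : Fin 5, trOp v (![F0, F1, F2, F3, F4] j) = ![F0, F1, F2, F3, F4] j := by
  intro j
  fin_cases j <;>
    simp only [Matrix.cons_val_zero, Matrix.cons_val_one, Matrix.head_cons, Matrix.cons_val_two,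
      Matrix.tail_cons, Matrix.cons_val_three, Matrix.cons_val_four]
  · exact trOp_F0 v
  · rw [F1_eq]; exact trOp_F_gen (0,1) (0,2) v
  · rw [F2_eq]; exact trOp_F_gen (1,0) (2,0) v
  · rw [F3_eq]; exact trOp_F_gen (1,1) (2,2) v
  · rw [F4_eq]; exact trOp_F_gen (1,2) (2,1) v

lemma F_mod (as : Idx) : ∀ j : Fin 5, modOp as (![F0, F1, F2, F3, F4] j) = ![F0, F1, F2, F3, F4] j := by
  intro j
  fin_cases j <;>
    simp only [Matrix.cons_val_zero, Matrix.cons_val_one, Matrix.head_cons, Matrix.cons_val_two,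
      Matrix.tail_cons, Matrix.cons_val_three, Matrix.cons_val_four]
  · exact modOp_F0 as
  · rw [F1_eq]; exact modOp_F_gen (0,1) (0,2) as (by decide)
  · rw [F2_eq]; exact modOp_F_gen (1,0) (2,0) as (by decide)
  · rw [F3_eq]; exact modOp_F_gen (1,1) (2,2) as (by decide)
  · rw [F4_eq]; exact modOp_F_gen (1,2) (2,1) as (by decide)


/-- the space of homogeneous degree-3 Heisenberg-invariant
polynomials in `ℂ[X_b : b ∈ (ℤ/3)²]` has dimension 5, with basis
`F₀, F₁, F₂, F₃, F₄`. -/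
theorem stmt_7 :
    LinearIndependent ℂ ![F0, F1, F2, F3, F4] ∧
    ∀ P : MvPolynomial Idx ℂ,
      (P.IsHomogeneous 3 ∧ HeisenbergInvariant P) ↔
        P ∈ Submodule.span ℂ (Set.range ![F0, F1, F2, F3, F4]) := by
  constructor
  · rw [Fintype.linearIndependent_iff]
    intro g hg
    rw [Fin.sum_univ_five] at hg
    simp only [Matrix.cons_val_zero, Matrix.cons_val_one, Matrix.head_cons, Matrix.cons_val_two,
      Matrix.tail_cons, Matrix.cons_val_three, Matrix.cons_val_four] at hg
    have hco : ∀ j : Fin 5, coeff (Mrep j) (g 0 • F0 + g 1 • F1 + g 2 • F2 + g 3 • F3 + g 4 • F4) = 0 := by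
      intro j; rw [hg]; exact coeff_zero _
    have e0 := hco 0; have e1 := hco 1; have e2 := hco 2; have e3 := hco 3; have e4 := hco 4
    simp only [coeff_add, coeff_smul, coeffM0F0, coeffM0F1, coeffM0F2, coeffM0F3, coeffM0F4,
      coeffM1F0, coeffM1F1, coeffM1F2, coeffM1F3, coeffM1F4,
      coeffM2F0, coeffM2F1, coeffM2F2, coeffM2F3, coeffM2F4,
      coeffM3F0, coeffM3F1, coeffM3F2, coeffM3F3, coeffM3F4,
      coeffM4F0, coeffM4F1, coeffM4F2, coeffM4F3, coeffM4F4,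
      smul_eq_mul, mul_zero, mul_one, add_zero, zero_add] at e0 e1 e2 e3 e4
    intro i
    fin_cases i
    · exact e0
    · exact mul_right_cancel₀ (by norm_num : (3:ℂ) ≠ 0) (by rw [zero_mul]; exact e1)
    · exact mul_right_cancel₀ (by norm_num : (3:ℂ) ≠ 0) (by rw [zero_mul]; exact e2)
    · exact mul_right_cancel₀ (by norm_num : (3:ℂ) ≠ 0) (by rw [zero_mul]; exact e3)
    · exact mul_right_cancel₀ (by norm_num : (3:ℂ) ≠ 0) (by rw [zero_mul]; exact e4)
  · intro P
    constructor
    · rintro ⟨hhom, htr, hmod⟩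
      set R : MvPolynomial Idx ℂ :=
        coeff (Mrep 0) P • F0 + (coeff (Mrep 1) P / 3) • F1 + (coeff (Mrep 2) P / 3) • F2
          + (coeff (Mrep 3) P / 3) • F3 + (coeff (Mrep 4) P / 3) • F4 with hR
      have hRhom : R.IsHomogeneous 3 := by
        refine ((((hom_smul F0_hom _).add (hom_smul (F_hom 1) _)).add
          (hom_smul (F_hom 2) _)).add (hom_smul (F_hom 3) _)).add (hom_smul (F_hom 4) _)
      have hQ : P - R = 0 := by
        apply key_vanish (hhom.sub hRhom)
        · intro a
          rw [map_sub, htr a, hR]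
          simp only [map_add, map_smul, trOp_F0]
          rw [show trOp a F1 = F1 from F_tr a 1, show trOp a F2 = F2 from F_tr a 2,
            show trOp a F3 = F3 from F_tr a 3, show trOp a F4 = F4 from F_tr a 4]
        · intro as
          rw [map_sub, hmod as, hR]
          simp only [map_add, map_smul, modOp_F0]
          rw [show modOp as F1 = F1 from F_mod as 1, show modOp as F2 = F2 from F_mod as 2,
            show modOp as F3 = F3 from F_mod as 3, show modOp as F4 = F4 from F_mod as 4]
        · rw [coeff_sub, hR]
          simp only [coeff_add, coeff_smul, smul_eq_mul, coeffM0F0, coeffM0F1, coeffM0F2,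
            coeffM0F3, coeffM0F4]
          ring
        · rw [coeff_sub, hR]
          simp only [coeff_add, coeff_smul, smul_eq_mul, coeffM1F0, coeffM1F1, coeffM1F2,
            coeffM1F3, coeffM1F4]
          ring
        · rw [coeff_sub, hR]
          simp only [coeff_add, coeff_smul, smul_eq_mul, coeffM2F0, coeffM2F1, coeffM2F2,
            coeffM2F3, coeffM2F4]
          ring
        · rw [coeff_sub, hR]
          simp only [coeff_add, coeff_smul, smul_eq_mul, coeffM3F0, coeffM3F1, coeffM3F2,
            coeffM3F3, coeffM3F4]
          ring
        · rw [coeff_sub, hR]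
          simp only [coeff_add, coeff_smul, smul_eq_mul, coeffM4F0, coeffM4F1, coeffM4F2,
            coeffM4F3, coeffM4F4]
          ring
      have hPR : P = R := by
        have := sub_eq_zero.mp hQ
        exact this
      rw [hPR, hR]
      have hmem : ∀ j : Fin 5, (![F0, F1, F2, F3, F4] j) ∈
          Submodule.span ℂ (Set.range ![F0, F1, F2, F3, F4]) :=
        fun j => Submodule.subset_span ⟨j, rfl⟩
      exact Submodule.add_mem _ (Submodule.add_mem _ (Submodule.add_mem _ (Submodule.add_mem _
        (Submodule.smul_mem _ _ (hmem 0)) (Submodule.smul_mem _ _ (hmem 1)))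
        (Submodule.smul_mem _ _ (hmem 2))) (Submodule.smul_mem _ _ (hmem 3)))
        (Submodule.smul_mem _ _ (hmem 4))
    · intro hP
      refine Submodule.span_induction ?_ ?_ ?_ ?_ hP
      · rintro x ⟨i, rfl⟩
        exact ⟨F_hom i, fun a => F_tr a i, fun as => F_mod as i⟩
      · exact ⟨isHomogeneous_zero _ _ _, fun a => map_zero _, fun as => map_zero _⟩
      · rintro x y hx hy ⟨hx1, hx2, hx3⟩ ⟨hy1, hy2, hy3⟩
        exact ⟨hx1.add hy1, fun a => by rw [map_add, hx2 a, hy2 a],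
          fun as => by rw [map_add, hx3 as, hy3 as]⟩
      · rintro r x hx ⟨hx1, hx2, hx3⟩
        exact ⟨hom_smul hx1 r, fun a => by rw [map_smul, hx2 a],
          fun as => by rw [map_smul, hx3 as]⟩
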